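/- For every h > 0 there exists a constant C = C(h) > 0 such that for all positive integers j, j' one has |(j·tanh(h·j))^{1/2} − (j'·tanh(h·j'))^{1/2}| ≤ C·|j − j'| / min{√j, √j'}. -/

import Mathlib

/-!
Write `f x = x * tanh (h * x)`. Since `f' = tanh (h x) + h x / cosh² (h x)` and
`|s| ≤ cosh² s / 2`, the function `f` is `3/2`-Lipschitz, while `f x ≥ tanh h * x`
for `x ≥ 1` because `tanh` is increasing. Hence
`|√(f y) - √(f x)| ≤ |f y - f x| / √(f x) ≤ (3/2) |y - x| / √(tanh h * x)`.
-/

open Real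

namespace Real

theorem hasDerivAt_tanh (x : ℝ) : HasDerivAt tanh (cosh x ^ 2)⁻¹ x := by
  have hquot := (hasDerivAt_sinh x).div (hasDerivAt_cosh x) (cosh_pos x).ne'
  rw [show sinh / cosh = tanh from funext fun y => (tanh_eq_sinh_div_cosh y).symm, ← sq, ← sq,
    cosh_sq_sub_sinh_sq, one_div] at hquot
  exact hquot

theorem strictMono_tanh : StrictMono tanh :=
  strictMono_of_deriv_pos fun x => by rw [(hasDerivAt_tanh x).deriv]; positivity

theorem tanh_pos {x : ℝ} (hx : 0 < x) : 0 < tanh x := by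
  simpa using strictMono_tanh hx

theorem tanh_nonneg {x : ℝ} (hx : 0 ≤ x) : 0 ≤ tanh x := by
  simpa using strictMono_tanh.monotone hx

theorem sq_le_sinh_sq (x : ℝ) : x ^ 2 ≤ sinh x ^ 2 := by
  rcases le_total 0 x with hx | hx
  · exact pow_le_pow_left₀ hx (self_le_sinh_iff.2 hx) 2
  · nlinarith [sinh_le_self_iff.2 hx]

theorem abs_div_cosh_sq_le_half (x : ℝ) : |x / cosh x ^ 2| ≤ 1 / 2 := by
  have hcosh : 0 < cosh x ^ 2 := by positivity
  rw [abs_div, abs_of_pos hcosh, div_le_iff₀ hcosh]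
  nlinarith [sq_le_sinh_sq x, cosh_sq' x, sq_abs x, sq_nonneg (|x| - 1)]

theorem abs_sqrt_sub_sqrt_le_div {a b : ℝ} (ha : 0 < a) (hb : 0 ≤ b) :
    |√b - √a| ≤ |b - a| / √a := by
  have hsa : 0 < √a := sqrt_pos.2 ha
  rw [le_div_iff₀ hsa]
  calc |√b - √a| * √a ≤ |√b - √a| * (√b + √a) := by
        gcongr
        exact le_add_of_nonneg_left (sqrt_nonneg b)
    _ = |(√b - √a) * (√b + √a)| := by
        rw [abs_mul, abs_of_nonneg (by positivity : 0 ≤ √b + √a)]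
    _ = |b - a| := by congr 1; linear_combination sq_sqrt hb - sq_sqrt ha.le

end Real

theorem hasDerivAt_mul_tanh_mul (h x : ℝ) :
    HasDerivAt (fun x => x * tanh (h * x)) (tanh (h * x) + h * x / cosh (h * x) ^ 2) x := by
  have hinner : HasDerivAt (fun x => h * x) h x := by simpa using (hasDerivAt_id x).const_mul h
  refine ((hasDerivAt_id' x).fun_mul ((hasDerivAt_tanh (h * x)).comp x hinner)).congr_deriv ?_
  simp only [Function.comp_apply]
  ring

theorem abs_mul_tanh_mul_sub_le (h x y : ℝ) :
    |y * tanh (h * y) - x * tanh (h * x)| ≤ 3 / 2 * |y - x| := by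
  have hbound : ∀ t, ‖tanh (h * t) + h * t / cosh (h * t) ^ 2‖ ≤ 3 / 2 := fun t => by
    rw [norm_eq_abs]
    calc |tanh (h * t) + h * t / cosh (h * t) ^ 2|
        ≤ |tanh (h * t)| + |h * t / cosh (h * t) ^ 2| := abs_add_le _ _
      _ ≤ 1 + (1 / 2 : ℝ) := add_le_add (abs_tanh_lt_one _).le (abs_div_cosh_sq_le_half _)
      _ = 3 / 2 := by norm_num
  simpa only [norm_eq_abs] using convex_univ.norm_image_sub_le_of_norm_hasDerivWithin_le
    (fun t _ => (hasDerivAt_mul_tanh_mul h t).hasDerivWithinAt) (fun t _ => hbound t)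
    (Set.mem_univ x) (Set.mem_univ y)

theorem tanh_mul_le_mul_tanh_mul {h x : ℝ} (hh : 0 ≤ h) (hx : 1 ≤ x) :
    tanh h * x ≤ x * tanh (h * x) := by
  rw [mul_comm]
  exact mul_le_mul_of_nonneg_left (strictMono_tanh.monotone (le_mul_of_one_le_right hh hx))
    (by linarith)

theorem abs_sqrt_mul_tanh_sub_le {h x y : ℝ} (hh : 0 < h) (hx : 1 ≤ x) (hy : 0 ≤ y) :
    |√(y * tanh (h * y)) - √(x * tanh (h * x))| ≤ 3 / (2 * √(tanh h)) * |y - x| / √x := by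
  have hth : 0 < tanh h := tanh_pos hh
  have hlow := tanh_mul_le_mul_tanh_mul hh.le hx
  have hpos : 0 < tanh h * x := by positivity
  calc |√(y * tanh (h * y)) - √(x * tanh (h * x))|
      ≤ |y * tanh (h * y) - x * tanh (h * x)| / √(x * tanh (h * x)) :=
        abs_sqrt_sub_sqrt_le_div (hpos.trans_le hlow)
          (mul_nonneg hy (tanh_nonneg (by positivity)))
    _ ≤ 3 / 2 * |y - x| / √(tanh h * x) := by
        gcongr
        exact abs_mul_tanh_mul_sub_le h x y
    _ = 3 / (2 * √(tanh h)) * |y - x| / √x := by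
        rw [sqrt_mul hth.le]
        field_simp

/-- For every depth h > 0 there is C = C(h) > 0 such that
|√(j tanh(h j)) − √(j' tanh(h j'))| ≤ C |j − j'| / min{√j, √j'} for all j, j' ≥ 1. -/
theorem freq_difference_upper_bound (h : ℝ) (hh : 0 < h) :
    ∃ C : ℝ, 0 < C ∧ ∀ j j' : ℕ, 1 ≤ j → 1 ≤ j' →
      |Real.sqrt ((j : ℝ) * Real.tanh (h * (j : ℝ))) -
          Real.sqrt ((j' : ℝ) * Real.tanh (h * (j' : ℝ)))| ≤
        C * |(j : ℝ) - (j' : ℝ)| / min (Real.sqrt j) (Real.sqrt j') := by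
  have hth : 0 < tanh h := tanh_pos hh
  refine ⟨3 / (2 * √(tanh h)), by positivity, fun j j' hj hj' => ?_⟩
  have hj1 : (1 : ℝ) ≤ j := Nat.one_le_cast.2 hj
  have hj1' : (1 : ℝ) ≤ j' := Nat.one_le_cast.2 hj'
  rcases le_total (j : ℝ) j' with hle | hle
  · rw [min_eq_left (sqrt_le_sqrt hle), abs_sub_comm, abs_sub_comm (j : ℝ)]
    exact abs_sqrt_mul_tanh_sub_le hh hj1 (by linarith)
  · rw [min_eq_right (sqrt_le_sqrt hle)]
    exact abs_sqrt_mul_tanh_sub_le hh hj1' (by linarith)
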